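/- In Q_4, for any family of exactly 2 vertex-disjoint edges (each an edge of Q_4) removed, the remaining graph is connected and has diameter at most 5. -/

import Mathlib

open SimpleGraph

/-- The `n`-dimensional hypercube: vertices are `Fin n → Bool`,
adjacent iff Hamming distance is `1`. -/
def Q (n : ℕ) : SimpleGraph (Fin n → Bool) where
  Adj u v := hammingDist u v = 1
  symm := ⟨fun (u v : Fin n → Bool) (h : hammingDist u v = 1) => show hammingDist v u = 1 by rwa [hammingDist_comm]⟩
  loopless := ⟨fun u (h : hammingDist u u = 1) => by simp [hammingDist_self] at h⟩

/-- Flip the `i`-th bit of `x`. -/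
def flipBit {n : ℕ} (x : Fin n → Bool) (i : Fin n) : Fin n → Bool :=
  Function.update x i (!x i)

/-- `S` is a subcube of dimension exactly `m` (fixing `n - m` coordinates). -/
def IsSubcube {n : ℕ} (m : ℕ) (S : Set (Fin n → Bool)) : Prop :=
  ∃ A : Finset (Fin n), A.card = n - m ∧ ∃ p : Fin n → Bool,
    S = {x | ∀ i ∈ A, x i = p i}

/-- `S` is a subcube of dimension at most `m` (fixing at least `n - m` coordinates). -/
def IsSubcubeLe {n : ℕ} (m : ℕ) (S : Set (Fin n → Bool)) : Prop :=
  ∃ A : Finset (Fin n), n - m ≤ A.card ∧ ∃ p : Fin n → Bool,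
    S = {x | ∀ i ∈ A, x i = p i}

/-!
Translations `x ↦ x xor t` and coordinate permutations are automorphisms of `Q n` that together
act transitively on directed edges, and an automorphism carries the graph left after removing `R`
isomorphically onto the one left after removing the image of `R`. So the first removed edge may be
taken to be `0 — e₀` and the second written `c — c + e_j` with `c_j = 0`. Each of the resulting
25 configurations is settled by a breadth-first search of depth 5 inside the 12 surviving
vertices, started from each of them.
-/

namespace SimpleGraph

variable {V W : Type*} {G : SimpleGraph V} {G' : SimpleGraph W}

theorem Hom.edist_le (f : G →g G') (u v : V) : G'.edist (f u) (f v) ≤ G.edist u v := by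
  by_cases h : G.Reachable u v
  · obtain ⟨p, hp⟩ := h.exists_walk_length_eq_edist
    rw [← hp, ← Walk.length_map f p]
    exact SimpleGraph.edist_le _
  · simp [edist_eq_top_of_not_reachable h]

theorem Iso.edist_eq (e : G ≃g G') (u v : V) : G'.edist (e u) (e v) = G.edist u v := by
  refine le_antisymm (Hom.edist_le e.toHom u v) ?_
  simpa using Hom.edist_le e.symm.toHom (e u) (e v)

theorem Iso.ediam_eq (e : G ≃g G') : G'.ediam = G.ediam := by
  refine le_antisymm (ediam_le_of_edist_le fun u v => ?_) (ediam_le_of_edist_le fun u v => ?_)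
  · rw [← e.apply_symm_apply u, ← e.apply_symm_apply v, e.edist_eq]
    exact edist_le_ediam
  · rw [← e.edist_eq]
    exact edist_le_ediam

theorem Iso.bijOn_compl_image (e : G ≃g G') (R : Set V) : Set.BijOn e Rᶜ (e '' R)ᶜ := by
  rw [← Set.image_compl_eq e.bijective]
  exact e.injective.injOn.bijOn_image

theorem connected_and_dist_le_of_ediam_le [Nonempty V] {k : ℕ} (h : G.ediam ≤ k) :
    G.Connected ∧ ∀ u v, G.dist u v ≤ k := by
  have hconn : G.Connected := connected_of_ediam_ne_top (ne_top_of_le_ne_top (by simp) h)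
  refine ⟨hconn, fun u v => ?_⟩
  have : (G.dist u v : ℕ∞) ≤ k := by
    rw [(hconn.preconnected u v).coe_dist_eq_edist]
    exact edist_le_ediam.trans h
  exact_mod_cast this

variable [DecidableEq V] (G) [DecidableRel G.Adj]

def bfsBall (s : Finset V) : ℕ → V → Finset V
  | 0, x => {x}
  | k + 1, x => s.filter fun y => y ∈ bfsBall s k x ∨ ∃ z ∈ bfsBall s k x, G.Adj z y

variable {G}

theorem mem_of_mem_bfsBall {s : Finset V} {x y : V} {k : ℕ} (hx : x ∈ s)
    (hy : y ∈ G.bfsBall s k x) : y ∈ s := by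
  cases k with
  | zero =>
    rw [bfsBall, Finset.mem_singleton] at hy
    rwa [hy]
  | succ k =>
    rw [bfsBall, Finset.mem_filter] at hy
    exact hy.1

theorem edist_induce_le_of_mem_bfsBall {s : Finset V} {x y : V} (hx : x ∈ s) (hy : y ∈ s)
    {k : ℕ} (h : y ∈ G.bfsBall s k x) : (G.induce ↑s).edist ⟨x, hx⟩ ⟨y, hy⟩ ≤ k := by
  induction k generalizing y with
  | zero =>
    rw [bfsBall, Finset.mem_singleton] at h
    subst h
    simp
  | succ k ih =>
    rw [bfsBall, Finset.mem_filter] at h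
    obtain ⟨-, hold | ⟨z, hz, hzy⟩⟩ := h
    · exact (ih hy hold).trans (by gcongr; omega)
    · have hzs := mem_of_mem_bfsBall hx hz
      calc (G.induce ↑s).edist ⟨x, hx⟩ ⟨y, hy⟩
          ≤ (G.induce ↑s).edist ⟨x, hx⟩ ⟨z, hzs⟩ + (G.induce ↑s).edist ⟨z, hzs⟩ ⟨y, hy⟩ :=
            SimpleGraph.edist_triangle
        _ ≤ k + 1 := add_le_add (ih hzs hz) (edist_eq_one_iff_adj.mpr (by exact hzy)).le
        _ = ↑(k + 1) := by push_cast; rfl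

theorem ediam_induce_le_of_bfsBall_eq {s : Finset V} {k : ℕ}
    (h : ∀ x ∈ s, G.bfsBall s k x = s) : (G.induce ↑s).ediam ≤ k :=
  ediam_le_of_edist_le fun ⟨x, hx⟩ ⟨y, hy⟩ =>
    edist_induce_le_of_mem_bfsBall hx hy (by rw [h x hx]; exact hy)

end SimpleGraph

instance (n : ℕ) : DecidableRel (Q n).Adj := fun u v =>
  inferInstanceAs (Decidable (hammingDist u v = 1))

theorem hammingDist_comp_equiv {ι κ β : Type*} [Fintype ι] [Fintype κ] [DecidableEq β]
    (σ : ι ≃ κ) (x y : κ → β) : hammingDist (x ∘ σ) (y ∘ σ) = hammingDist x y :=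
  Finset.card_equiv σ (by simp)

namespace Q

variable {n : ℕ}

@[simp]
theorem flipBit_flipBit (x : Fin n → Bool) (i : Fin n) : flipBit (flipBit x i) i = x := by
  funext j
  by_cases h : j = i
  · subst h; simp [flipBit]
  · simp [flipBit, h]

theorem adj_iff_exists_flipBit {u v : Fin n → Bool} : (Q n).Adj u v ↔ ∃ i, v = flipBit u i := by
  change hammingDist u v = 1 ↔ _
  rw [hammingDist, Finset.card_eq_one]
  refine exists_congr fun i => ?_
  rw [Finset.ext_iff, funext_iff]
  refine forall_congr' fun j => ?_
  by_cases hj : j = i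
  · subst hj; simp [flipBit, Bool.eq_not, eq_comm]
  · simp [flipBit, hj, eq_comm]

theorem adj_flipBit (x : Fin n → Bool) (i : Fin n) : (Q n).Adj x (flipBit x i) :=
  adj_iff_exists_flipBit.mpr ⟨i, rfl⟩

def xorIso (t : Fin n → Bool) : Q n ≃g Q n where
  toFun x i := xor (t i) (x i)
  invFun x i := xor (t i) (x i)
  left_inv x := by simp
  right_inv x := by simp
  map_rel_iff' {x y} := by
    change hammingDist (fun i => xor (t i) (x i)) (fun i => xor (t i) (y i)) = 1 ↔
      hammingDist x y = 1
    rw [hammingDist_comp (fun i => xor (t i)) fun i _ _ => Bool.xor_right_inj.mp]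

@[simp]
theorem xorIso_apply (t x : Fin n → Bool) : xorIso t x = fun i => xor (t i) (x i) := rfl

def permIso (σ : Equiv.Perm (Fin n)) : Q n ≃g Q n where
  toEquiv := σ.arrowCongr (Equiv.refl Bool)
  map_rel_iff' {x y} := by
    change hammingDist (x ∘ σ.symm) (y ∘ σ.symm) = 1 ↔ hammingDist x y = 1
    rw [hammingDist_comp_equiv]

@[simp]
theorem permIso_apply (σ : Equiv.Perm (Fin n)) (x : Fin n → Bool) : permIso σ x = x ∘ σ.symm :=
  rfl

theorem xorIso_flipBit (t x : Fin n → Bool) (i : Fin n) :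
    xorIso t (flipBit x i) = flipBit (xorIso t x) i := by
  funext j
  by_cases h : j = i
  · subst h; simp [flipBit]
  · simp [flipBit, h]

theorem permIso_flipBit (σ : Equiv.Perm (Fin n)) (x : Fin n → Bool) (i : Fin n) :
    permIso σ (flipBit x i) = flipBit (permIso σ x) (σ i) := by
  simp [flipBit, Function.update_comp_equiv]

theorem exists_iso_of_adj {a b a' b' : Fin n → Bool} (h : (Q n).Adj a b) (h' : (Q n).Adj a' b') :
    ∃ e : Q n ≃g Q n, e a = a' ∧ e b = b' := by
  obtain ⟨i, rfl⟩ := adj_iff_exists_flipBit.mp h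
  obtain ⟨j, rfl⟩ := adj_iff_exists_flipBit.mp h'
  let e := (xorIso a).trans ((permIso (Equiv.swap i j)).trans (xorIso a'))
  have hea : e a = a' := by funext k; simp [e]
  refine ⟨e, hea, ?_⟩
  change xorIso a' (permIso _ (xorIso a (flipBit a i))) = _
  rw [xorIso_flipBit, permIso_flipBit, xorIso_flipBit, Equiv.swap_apply_left]
  exact congrArg (flipBit · j) hea

theorem exists_pair_eq_flipBit {c d : Fin n → Bool} (h : (Q n).Adj c d) :
    ∃ c' j, c' j = false ∧ ({c, d} : Set (Fin n → Bool)) = {c', flipBit c' j} := by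
  obtain ⟨j, rfl⟩ := adj_iff_exists_flipBit.mp h
  cases hc : c j
  · exact ⟨c, j, hc, rfl⟩
  · exact ⟨flipBit c j, j, by simp [flipBit, hc], by rw [flipBit_flipBit, Set.pair_comm]⟩

end Q

theorem Q4_base_edge_nonempty_and_ediam_le {c : Fin 4 → Bool} {j : Fin 4} (hcj : c j = false)
    (hdisj : Disjoint ({fun _ => false, flipBit (fun _ => false) 0} : Set (Fin 4 → Bool))
      {c, flipBit c j}) :
    Nonempty ↥({fun _ => false, flipBit (fun _ => false) 0} ∪ {c, flipBit c j} : Set _)ᶜ ∧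
      ((Q 4).induce
        ({fun _ => false, flipBit (fun _ => false) 0} ∪ {c, flipBit c j})ᶜ).ediam ≤ 5 := by
  have check : ∀ c : Fin 4 → Bool, ∀ j : Fin 4, c j = false →
      Disjoint ({fun _ => false, flipBit (fun _ => false) 0} : Finset (Fin 4 → Bool))
        {c, flipBit c j} →
      let s := ({fun _ => false, flipBit (fun _ => false) 0} ∪ {c, flipBit c j} : Finset _)ᶜ
      s.Nonempty ∧ ∀ x ∈ s, (Q 4).bfsBall s 5 x = s := by
    decide +kernel
  obtain ⟨hne, hball⟩ := check c j hcj (by rw [← Finset.disjoint_coe]; simpa using hdisj)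
  have hs : ({fun _ => false, flipBit (fun _ => false) 0} ∪ {c, flipBit c j} : Set _)ᶜ =
      ↑({fun _ => false, flipBit (fun _ => false) 0} ∪ {c, flipBit c j} : Finset _)ᶜ := by
    simp only [Finset.coe_compl, Finset.coe_union, Finset.coe_insert, Finset.coe_singleton]
  rw [hs]
  exact ⟨hne.coe_sort, SimpleGraph.ediam_induce_le_of_bfsBall_eq hball⟩

theorem q4_minus_two_edges (S T : Set (Fin 4 → Bool))
    (hS : ∃ a b : Fin 4 → Bool, (Q 4).Adj a b ∧ S = {a, b})
    (hT : ∃ a b : Fin 4 → Bool, (Q 4).Adj a b ∧ T = {a, b})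
    (hd : Disjoint S T) :
    ((Q 4).induce (S ∪ T)ᶜ).Connected ∧
    ∀ x y, ((Q 4).induce (S ∪ T)ᶜ).dist x y ≤ 5 := by
  obtain ⟨a, b, hab, rfl⟩ := hS
  obtain ⟨c, d, hcd, rfl⟩ := hT
  obtain ⟨e, hea, heb⟩ := Q.exists_iso_of_adj hab (Q.adj_flipBit (fun _ => false) 0)
  obtain ⟨c', j, hcj, hpair⟩ := Q.exists_pair_eq_flipBit (e.map_adj_iff.mpr hcd)
  have himage : e '' ({a, b} ∪ {c, d}) =
      {fun _ => false, flipBit (fun _ => false) 0} ∪ {c', flipBit c' j} := by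
    rw [Set.image_union, Set.image_pair, Set.image_pair, hea, heb, hpair]
  have hdisj := (Set.disjoint_image_iff e.injective).mpr hd
  rw [Set.image_pair, Set.image_pair, hea, heb, hpair] at hdisj
  obtain ⟨hne, hdiam⟩ := Q4_base_edge_nonempty_and_ediam_le hcj hdisj
  have φ := e.induce (himage ▸ e.bijOn_compl_image _)
  have : Nonempty ↥({a, b} ∪ {c, d} : Set _)ᶜ := hne.map φ.symm
  exact SimpleGraph.connected_and_dist_le_of_ediam_le (φ.ediam_eq ▸ hdiam)
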